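/- Let A, B, X ∈ B(H). Then ω(A*XB + B*XA) ≤ ((1/2)·(‖A‖² + ‖B‖²) + ‖AB*‖)·ω(X). -/

import Mathlib

/-!
Writing `S = A*XB + B*XA`, one has `⟪S x, x⟫ = ⟪X (B x), A x⟫ + ⟪X (A x), B x⟫`. Polarization bounds
`‖⟪X u, v⟫ + ⟪X v, u⟫‖` by `ω(X) (‖u‖² + ‖v‖²)`, and rescaling `u, v` to equal norms improves this
to `2 ω(X) ‖u‖ ‖v‖`. Buzano's inequality `|⟪u, x⟫ ⟪x, w⟫| ≤ (‖u‖ ‖w‖ + |⟪u, w⟫|) / 2`, applied to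
`u = A*A x` and `w = B*B x`, gives `2 ‖A x‖ ‖B x‖ ≤ ‖A‖ ‖B‖ + ‖AB*‖`, and AM-GM finishes.
-/

open scoped InnerProductSpace

variable {H : Type*} [NormedAddCommGroup H] [InnerProductSpace ℂ H] [CompleteSpace H]

/-- The absolute value `|T| = (T*T)^(1/2)` of a bounded operator. -/
noncomputable def absOp (T : H →L[ℂ] H) : H →L[ℂ] H := CFC.sqrt (star T * T)

/-- The numerical radius `ω(T) = sup {|⟨Tx, x⟩| : ‖x‖ = 1}`. -/
noncomputable def numRad (T : H →L[ℂ] H) : ℝ :=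
  sSup {r : ℝ | ∃ x : H, ‖x‖ = 1 ∧ r = ‖(inner ℂ (T x) x : ℂ)‖}

section InnerProductSpace

variable {𝕜 E : Type*} [RCLike 𝕜] [NormedAddCommGroup E] [InnerProductSpace 𝕜 E]

theorem inner_add_inner_swap_eq_polarization (T : E →L[𝕜] E) (u v : E) :
    ⟪T u, v⟫_𝕜 + ⟪T v, u⟫_𝕜 = (⟪T (u + v), u + v⟫_𝕜 - ⟪T (u - v), u - v⟫_𝕜) / 2 := by
  simp only [map_add, map_sub, inner_add_left, inner_add_right, inner_sub_left, inner_sub_right]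
  ring

/-- Buzano's inequality. -/
theorem norm_inner_mul_inner_le {x : E} (hx : ‖x‖ = 1) (u w : E) :
    ‖⟪u, x⟫_𝕜 * ⟪x, w⟫_𝕜‖ ≤ (‖u‖ * ‖w‖ + ‖⟪u, w⟫_𝕜‖) / 2 := by
  -- the reflection of `u` in the line `𝕜 ∙ x` has the same norm as `u`
  set R := (𝕜 ∙ x).reflection
  have hR : ⟪R u, w⟫_𝕜 = 2 * (⟪u, x⟫_𝕜 * ⟪x, w⟫_𝕜) - ⟪u, w⟫_𝕜 := by
    rw [Submodule.reflection_apply, Submodule.starProjection_unit_singleton 𝕜 hx, inner_sub_left,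
      two_smul, inner_add_left, inner_smul_left, inner_conj_symm]
    ring
  have h2 : 2 * ‖⟪u, x⟫_𝕜 * ⟪x, w⟫_𝕜‖ ≤ ‖u‖ * ‖w‖ + ‖⟪u, w⟫_𝕜‖ :=
    calc 2 * ‖⟪u, x⟫_𝕜 * ⟪x, w⟫_𝕜‖ = ‖⟪R u, w⟫_𝕜 + ⟪u, w⟫_𝕜‖ := by
          rw [hR, sub_add_cancel, norm_mul (2 : 𝕜), RCLike.norm_ofNat]
      _ ≤ ‖R u‖ * ‖w‖ + ‖⟪u, w⟫_𝕜‖ := (norm_add_le _ _).trans (by gcongr; exact norm_inner_le_norm _ _)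
      _ = ‖u‖ * ‖w‖ + ‖⟪u, w⟫_𝕜‖ := by rw [LinearIsometryEquiv.norm_map]
  linarith

theorem two_mul_norm_apply_mul_norm_apply_le [CompleteSpace E] (A B : E →L[𝕜] E) {x : E}
    (hx : ‖x‖ = 1) : 2 * (‖A x‖ * ‖B x‖) ≤ ‖A‖ * ‖B‖ + ‖A * star B‖ := by
  set c := ‖A x‖ * ‖B x‖
  rcases (show 0 ≤ c by positivity).eq_or_lt with hc | hc
  · rw [← hc, mul_zero]; positivity
  suffices c * c ≤ (‖A‖ * ‖B‖ + ‖A * star B‖) / 2 * c by nlinarith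
  have hu : ‖star A (A x)‖ ≤ ‖A‖ * ‖A x‖ := ((star A).le_opNorm _).trans_eq (by rw [← norm_star A])
  have hw : ‖star B (B x)‖ ≤ ‖B‖ * ‖B x‖ := ((star B).le_opNorm _).trans_eq (by rw [← norm_star B])
  have huw : ‖⟪star A (A x), star B (B x)⟫_𝕜‖ ≤ ‖A * star B‖ * c := by
    rw [ContinuousLinearMap.star_eq_adjoint, ContinuousLinearMap.adjoint_inner_left]
    calc _ ≤ ‖A x‖ * ‖(A * star B) (B x)‖ := norm_inner_le_norm _ _
      _ ≤ ‖A x‖ * (‖A * star B‖ * ‖B x‖) := by gcongr; exact (A * star B).le_opNorm _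
      _ = ‖A * star B‖ * c := by ring
  calc c * c = ‖⟪star A (A x), x⟫_𝕜 * ⟪x, star B (B x)⟫_𝕜‖ := by
        rw [ContinuousLinearMap.star_eq_adjoint, ContinuousLinearMap.star_eq_adjoint,
          ContinuousLinearMap.adjoint_inner_left, ContinuousLinearMap.adjoint_inner_right,
          inner_self_eq_norm_sq_to_K, inner_self_eq_norm_sq_to_K, norm_mul]
        simp only [norm_pow, RCLike.norm_ofReal, abs_norm]
        ring
    _ ≤ (‖star A (A x)‖ * ‖star B (B x)‖ + ‖⟪star A (A x), star B (B x)⟫_𝕜‖) / 2 :=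
        norm_inner_mul_inner_le hx _ _
    _ ≤ ((‖A‖ * ‖A x‖) * (‖B‖ * ‖B x‖) + ‖A * star B‖ * c) / 2 := by gcongr
    _ = (‖A‖ * ‖B‖ + ‖A * star B‖) / 2 * c := by ring

end InnerProductSpace

section NumRad

variable {V : Type*} [NormedAddCommGroup V] [InnerProductSpace ℂ V]

theorem inner_add_inner_swap_ofReal_smul (T : V →L[ℂ] V) (a b : ℝ) (u v : V) :
    ⟪T ((a : ℂ) • u), (b : ℂ) • v⟫_ℂ + ⟪T ((b : ℂ) • v), (a : ℂ) • u⟫_ℂ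
      = ((a * b : ℝ) : ℂ) * (⟪T u, v⟫_ℂ + ⟪T v, u⟫_ℂ) := by
  simp only [map_smul, inner_smul_left, inner_smul_right, Complex.conj_ofReal, Complex.ofReal_mul]
  ring

theorem norm_inner_self_le_numRad (T : V →L[ℂ] V) {x : V} (hx : ‖x‖ = 1) :
    ‖⟪T x, x⟫_ℂ‖ ≤ numRad T := by
  refine le_csSup ⟨‖T‖, ?_⟩ ⟨x, hx, rfl⟩
  rintro r ⟨y, hy, rfl⟩
  simpa [hy] using norm_inner_le_norm (𝕜 := ℂ) (T y) y |>.trans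
    (mul_le_mul_of_nonneg_right (T.le_opNorm y) (norm_nonneg y))

theorem numRad_nonneg (T : V →L[ℂ] V) : 0 ≤ numRad T :=
  Real.sSup_nonneg <| by rintro r ⟨x, -, rfl⟩; positivity

theorem norm_inner_self_le_numRad_mul_sq (T : V →L[ℂ] V) (w : V) :
    ‖⟪T w, w⟫_ℂ‖ ≤ numRad T * ‖w‖ ^ 2 := by
  rcases eq_or_ne w 0 with rfl | hw
  · simp
  have hw' : 0 < ‖w‖ := norm_pos_iff.2 hw
  have hx : ‖(‖w‖⁻¹ : ℂ) • w‖ = 1 := by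
    rw [norm_smul, norm_inv, Complex.norm_real, norm_norm, inv_mul_cancel₀ hw'.ne']
  have h := norm_inner_self_le_numRad T hx
  rwa [map_smul, inner_smul_left, inner_smul_right, norm_mul, norm_mul, RCLike.norm_conj,
    ← mul_assoc, ← sq, norm_inv, Complex.norm_real, norm_norm, inv_pow,
    inv_mul_le_iff₀ (by positivity), mul_comm] at h

theorem norm_inner_add_inner_swap_le_numRad_mul (X : V →L[ℂ] V) (u v : V) :
    ‖⟪X u, v⟫_ℂ + ⟪X v, u⟫_ℂ‖ ≤ numRad X * (‖u‖ ^ 2 + ‖v‖ ^ 2) := by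
  rw [inner_add_inner_swap_eq_polarization, norm_div, RCLike.norm_ofNat]
  calc _ ≤ (numRad X * ‖u + v‖ ^ 2 + numRad X * ‖u - v‖ ^ 2) / 2 := by
        gcongr
        exact (norm_sub_le _ _).trans (add_le_add (norm_inner_self_le_numRad_mul_sq X _)
          (norm_inner_self_le_numRad_mul_sq X _))
    _ = numRad X * (‖u‖ ^ 2 + ‖v‖ ^ 2) := by
        rw [← mul_add, parallelogram_law_with_norm ℂ u v]
        ring

theorem norm_inner_add_inner_swap_le_two_mul_numRad_mul (X : V →L[ℂ] V) (u v : V) :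
    ‖⟪X u, v⟫_ℂ + ⟪X v, u⟫_ℂ‖ ≤ 2 * numRad X * (‖u‖ * ‖v‖) := by
  rcases (show 0 ≤ ‖u‖ * ‖v‖ by positivity).eq_or_lt with hc | hc
  · obtain rfl | rfl : u = 0 ∨ v = 0 := by simpa using hc.symm
    all_goals simp
  -- rescale `u` and `v` to the common norm `‖u‖ ‖v‖`
  have h := norm_inner_add_inner_swap_le_numRad_mul X ((‖v‖ : ℂ) • u) ((‖u‖ : ℂ) • v)
  rw [inner_add_inner_swap_ofReal_smul, norm_mul, Complex.norm_real, norm_mul, norm_smul,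
    norm_smul, Complex.norm_real, Complex.norm_real, norm_norm, norm_norm] at h
  have h' : ‖u‖ * ‖v‖ * ‖⟪X u, v⟫_ℂ + ⟪X v, u⟫_ℂ‖ ≤ ‖u‖ * ‖v‖ * (2 * numRad X * (‖u‖ * ‖v‖)) := by
    linarith
  exact le_of_mul_le_mul_left h' hc

end NumRad

theorem inner_symmetrized_product_apply_self (A B X : H →L[ℂ] H) (x : H) :
    ⟪(star A * X * B + star B * X * A) x, x⟫_ℂ = ⟪X (B x), A x⟫_ℂ + ⟪X (A x), B x⟫_ℂ := by
  simp only [ContinuousLinearMap.star_eq_adjoint, add_apply, mul_apply_eq_comp, inner_add_left,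
    ContinuousLinearMap.adjoint_inner_left]

theorem numRad_symmetrized_product_le (A B X : H →L[ℂ] H) :
    numRad (star A * X * B + star B * X * A) ≤ (‖A‖ * ‖B‖ + ‖A * star B‖) * numRad X := by
  refine Real.sSup_le ?_ (mul_nonneg (by positivity) (numRad_nonneg X))
  rintro r ⟨x, hx, rfl⟩
  rw [inner_symmetrized_product_apply_self]
  calc _ ≤ 2 * numRad X * (‖B x‖ * ‖A x‖) := norm_inner_add_inner_swap_le_two_mul_numRad_mul ..
    _ = numRad X * (2 * (‖A x‖ * ‖B x‖)) := by ring
    _ ≤ numRad X * (‖A‖ * ‖B‖ + ‖A * star B‖) :=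
        mul_le_mul_of_nonneg_left (two_mul_norm_apply_mul_norm_apply_le A B hx) (numRad_nonneg X)
    _ = _ := mul_comm _ _

/-- Theorem 2.16: `ω(A*XB + B*XA) ≤ ((1/2)(‖A‖² + ‖B‖²) + ‖AB*‖) ω(X)`. -/
theorem numRad_symmetrized_product (A B X : H →L[ℂ] H) :
    numRad (star A * X * B + star B * X * A)
      ≤ ((1 / 2) * (‖A‖ ^ 2 + ‖B‖ ^ 2) + ‖A * star B‖) * numRad X := by
  refine (numRad_symmetrized_product_le A B X).trans ?_
  have := two_mul_le_add_sq ‖A‖ ‖B‖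
  gcongr ?_ * _
  · exact numRad_nonneg X
  · linarith
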